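/- arXiv:1605.05488 — 9 statements merged into one kernel-verified Lean document; each statement's English description precedes it below -/
import Mathlib

section
/- Let κ, V, W > 0 and 0 < f_L ≤ f_U. Define the optimal CPU-cycle frequency as a function of the virtual energy queue length B̃ by f*(B̃) = f_U if B̃ ≥ 0, and f*(B̃) = min(max((V/(−2·B̃·κ))^{1/3}, f_L), f_U) if B̃ < 0. Then f* is monotone non-decreasing on ℝ. In particular, the optimal CPU-cycle frequency for local execution does not depend on the channel gain and is non-decreasing in the battery energy level. -/
/-- The optimal CPU-cycle frequency for local execution, as a function of the virtual
energy queue length `B̃` (equal to `f_U` for `B̃ ≥ 0` and to `(V/(−2B̃κ))^{1/3}` clamped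
to `[f_L, f_U]` for `B̃ < 0`), is monotone non-decreasing in `B̃`.  (It does not depend
on the channel gain by construction.) -/
theorem stmt_4 (κ V W : ℝ) (hκ : 0 < κ) (hV : 0 < V) (hW : 0 < W)
    (fL fU : ℝ) (hfL : 0 < fL) (hLU : fL ≤ fU)
    (fstar : ℝ → ℝ)
    (hfstar : ∀ Btilde : ℝ, fstar Btilde =
      if 0 ≤ Btilde then fU
      else min (max ((V / (-2 * Btilde * κ)) ^ ((1 : ℝ) / 3)) fL) fU) :
    Monotone fstar := by
  intro a b hab
  rw [hfstar a, hfstar b]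
  by_cases hb : 0 ≤ b
  · rw [if_pos hb]
    by_cases ha : 0 ≤ a
    · rw [if_pos ha]
    · rw [if_neg ha]; exact min_le_right _ _
  · rw [if_neg hb, if_neg (fun ha => hb (le_trans ha hab))]
    push_neg at hb
    have ha : a < 0 := lt_of_le_of_lt hab hb
    have h1 : (0:ℝ) < -2 * b * κ := by nlinarith
    have h2 : -2 * b * κ ≤ -2 * a * κ := by nlinarith
    have hdiv : V / (-2 * a * κ) ≤ V / (-2 * b * κ) :=
      div_le_div_of_nonneg_left hV.le h1 h2
    have hbase : (0:ℝ) ≤ V / (-2 * a * κ) := div_nonneg hV.le (by nlinarith)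
    have := Real.rpow_le_rpow hbase hdiv (by norm_num : (0:ℝ) ≤ 1/3)
    exact min_le_min (max_le_max this le_rfl) le_rfl
end

section
/- Let ω, σ, h, L > 0 and let E be a real number with E > σ·L·ln 2/(ω·h). Then there exists a unique p > 0 satisfying p·L = ω·log₂(1 + h·p/σ)·E, i.e., a unique transmit power at which offloading the L input bits consumes exactly E units of energy. -/
/-!
Substituting `x = h p / σ` turns the equation into `x = a log (1 + x)` with
`a = ω E h / (σ L log 2)`, and the hypothesis on `E` says exactly `1 < a`.
A positive root exists by the intermediate value theorem on `[a - 1, exp (2a) - 1]`: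
at the left end `a log a > a - 1`, at the right end `exp (2a) - 1 ≥ 2a + 2a² > 2a²`.
It is unique because `log (1 + x) / x`, a secant slope of the strictly concave `log`,
is strictly decreasing on `(0, ∞)`.
-/

open Real Set

lemma strictAntiOn_log_one_add_div : StrictAntiOn (fun x : ℝ => log (1 + x) / x) (Ioi 0) := by
  intro x (hx : 0 < x) y (hy : 0 < y) hxy
  simpa only [add_sub_cancel_left, log_one, sub_zero] using
    strictConcaveOn_log_Ioi.secant_strict_mono (mem_Ioi.2 one_pos) (show 0 < 1 + x by linarith)
      (show 0 < 1 + y by linarith) (ne_of_gt (by linarith)) (ne_of_gt (by linarith))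
      (by linarith)

lemma sub_one_lt_mul_log {a : ℝ} (ha : 1 < a) : a - 1 < a * log a := by
  have h := log_lt_sub_one_of_pos (inv_pos.2 (zero_lt_one.trans ha)) (inv_ne_one.2 ha.ne')
  rw [log_inv] at h
  have : a * a⁻¹ = 1 := mul_inv_cancel₀ (by linarith)
  nlinarith

lemma exists_eq_mul_log_one_add {a : ℝ} (ha : 1 < a) : ∃ x, 0 < x ∧ x = a * log (1 + x) := by
  have hlo : a - 1 - a * log (1 + (a - 1)) ≤ 0 := by
    rw [add_sub_cancel]; linarith [sub_one_lt_mul_log ha]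
  have hhi : 0 ≤ (exp (2 * a) - 1) - a * log (1 + (exp (2 * a) - 1)) := by
    rw [add_sub_cancel, log_exp]
    nlinarith [quadratic_le_exp_of_nonneg (by linarith : 0 ≤ 2 * a)]
  have hle : a - 1 ≤ exp (2 * a) - 1 := by
    linarith [add_one_le_exp (2 * a)]
  have hcont : ContinuousOn (fun x => x - a * log (1 + x)) (Icc (a - 1) (exp (2 * a) - 1)) := by
    refine continuousOn_id.sub (continuousOn_const.mul (ContinuousOn.log (by fun_prop) ?_))
    intro x hx; linarith [hx.1]
  obtain ⟨x, hx, hfx⟩ := intermediate_value_Icc hle hcont ⟨hlo, hhi⟩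
  exact ⟨x, by linarith [hx.1], by linarith [hfx]⟩

lemma existsUnique_eq_mul_log_one_add {a : ℝ} (ha : 1 < a) :
    ∃! x, 0 < x ∧ x = a * log (1 + x) := by
  obtain ⟨x, hx, hxa⟩ := exists_eq_mul_log_one_add ha
  refine ⟨x, ⟨hx, hxa⟩, fun y ⟨hy, hya⟩ => strictAntiOn_log_one_add_div.injOn hy hx ?_⟩
  have slope_eq : ∀ z, 0 < z → z = a * log (1 + z) → log (1 + z) / z = a⁻¹ := by
    intro z hz hza
    rw [div_eq_iff hz.ne', eq_inv_mul_iff_mul_eq₀ (zero_lt_one.trans ha).ne']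
    exact hza.symm
  simp only [slope_eq y hy hya, slope_eq x hx hxa]

lemma mul_eq_logb_mul_iff {ω σ h L E p : ℝ} (hσ : 0 < σ) (hh : 0 < h) (hL : 0 < L) :
    p * L = ω * logb 2 (1 + h * p / σ) * E ↔
      h * p / σ = ω * E * h / (σ * L * log 2) * log (1 + h * p / σ) := by
  have hlog2 : 0 < log 2 := log_pos one_lt_two
  have lhs : h * p / σ = h / (σ * L) * (p * L) := by field_simp
  have rhs : ω * E * h / (σ * L * log 2) * log (1 + h * p / σ) =
      h / (σ * L) * (ω * logb 2 (1 + h * p / σ) * E) := by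
    rw [logb]; field_simp
  rw [rhs, lhs, mul_right_inj' (by positivity)]

/-- If `E > σ·L·ln 2/(ω·h)`, then there is a unique transmit power `p > 0` at which
offloading the `L` input bits consumes exactly `E` units of energy, i.e. a unique
`p > 0` with `p·L = ω·log₂(1 + h·p/σ)·E`. -/
theorem stmt_7 (ω σ h L E : ℝ) (hω : 0 < ω) (hσ : 0 < σ) (hh : 0 < h) (hL : 0 < L)
    (hE : σ * L * Real.log 2 / (ω * h) < E) :
    ∃! p : ℝ, 0 < p ∧ p * L = ω * Real.logb 2 (1 + h * p / σ) * E := by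
  have hlog2 : 0 < log 2 := log_pos one_lt_two
  have ha : 1 < ω * E * h / (σ * L * log 2) := by
    rw [div_lt_iff₀ (by positivity)] at hE
    rw [one_lt_div (by positivity)]
    linarith
  obtain ⟨x, ⟨hx, hxa⟩, huniq⟩ := existsUnique_eq_mul_log_one_add ha
  have hx_eq : ∀ p, h * p / σ = x ↔ p = σ * x / h := fun p => by
    constructor <;> rintro rfl <;> field_simp
  refine ⟨σ * x / h, ⟨by positivity, ?_⟩, fun p ⟨hp, hpE⟩ => ?_⟩
  · rw [mul_eq_logb_mul_iff hσ hh hL, (hx_eq _).2 rfl]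
    exact hxa
  · exact (hx_eq p).1 (huniq _ ⟨by positivity, (mul_eq_logb_mul_iff hσ hh hL).1 hpE⟩)
end

section
/- Let ω, σ, h, L, τ_d, p_max > 0 and suppose σ·L·ln 2/(ω·h) < E_min ≤ E_max. Let p_{E_min} and p_{E_max} denote, respectively, the unique positive solutions of p·L = ω·log₂(1 + h·p/σ)·E_min and p·L = ω·log₂(1 + h·p/σ)·E_max, and let p_{L,τ_d} = (2^{L/(ω·τ_d)} − 1)·σ/h. Then the feasible set {p ∈ ℝ : 0 < p ≤ p_max, L/(ω·log₂(1 + h·p/σ)) ≤ τ_d, and E_min ≤ p·L/(ω·log₂(1 + h·p/σ)) ≤ E_max} equals the closed interval [max(p_{L,τ_d}, p_{E_min}), min(p_max, p_{E_max})]. -/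
lemma key_log (c : ℝ) (hc : 0 < c) {a b : ℝ} (ha : 0 < a) (hab : a < b) :
    a * Real.log (1 + c * b) < b * Real.log (1 + c * a) := by
  have hb : 0 < b := ha.trans hab
  have hx : (1 : ℝ) + c * b ∈ Set.Ioi (0:ℝ) := by
    simp; nlinarith
  have hy : (1 : ℝ) ∈ Set.Ioi (0:ℝ) := by simp
  have hxy : (1 : ℝ) + c * b ≠ 1 := by nlinarith
  have ht : 0 < a / b := div_pos ha hb
  have ht2 : 0 < 1 - a / b := by
    have : a / b < 1 := (div_lt_one hb).2 hab
    linarith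
  have hsum : a / b + (1 - a / b) = 1 := by ring
  have := strictConcaveOn_log_Ioi.2 hx hy hxy ht ht2 hsum
  simp only [smul_eq_mul, Real.log_one, mul_zero, add_zero] at this
  have harg : a / b * (1 + c * b) + (1 - a / b) * 1 = 1 + c * a := by
    field_simp; ring
  rw [harg] at this
  have := (mul_lt_mul_iff_right₀ hb).2 this
  calc a * Real.log (1 + c * b) = b * (a / b * Real.log (1 + c * b)) := by
        field_simp
    _ < b * Real.log (1 + c * a) := this

/-- Feasibility interval for computation offloading: if `σ·L·ln 2/(ω·h) < E_min ≤ E_max`,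
then the set of transmit powers satisfying the maximum power, deadline, and battery
output energy constraints equals `[max(p_{L,τ_d}, p_{E_min}), min(p_max, p_{E_max})]`,
where `p_{E_min}`, `p_{E_max}` are the unique positive solutions of
`p·L = r(h,p)·E_min` and `p·L = r(h,p)·E_max`, and `p_{L,τ_d} = (2^{L/(ω·τ_d)} − 1)·σ/h`. -/
theorem stmt_8 (ω σ h L τd pmax Emin Emax : ℝ)
    (hω : 0 < ω) (hσ : 0 < σ) (hh : 0 < h) (hL : 0 < L) (hτd : 0 < τd)
    (hpmax : 0 < pmax)
    (hEmin : σ * L * Real.log 2 / (ω * h) < Emin) (hE : Emin ≤ Emax)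
    (pEmin pEmax pLτ : ℝ)
    (hpEmin : 0 < pEmin ∧ pEmin * L = ω * Real.logb 2 (1 + h * pEmin / σ) * Emin)
    (hpEminU : ∀ p : ℝ, 0 < p → p * L = ω * Real.logb 2 (1 + h * p / σ) * Emin → p = pEmin)
    (hpEmax : 0 < pEmax ∧ pEmax * L = ω * Real.logb 2 (1 + h * pEmax / σ) * Emax)
    (hpEmaxU : ∀ p : ℝ, 0 < p → p * L = ω * Real.logb 2 (1 + h * p / σ) * Emax → p = pEmax)
    (hpLτ : pLτ = (2 ^ (L / (ω * τd)) - 1) * σ / h) :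
    {p : ℝ | 0 < p ∧ p ≤ pmax ∧
      L / (ω * Real.logb 2 (1 + h * p / σ)) ≤ τd ∧
      Emin ≤ p * L / (ω * Real.logb 2 (1 + h * p / σ)) ∧
      p * L / (ω * Real.logb 2 (1 + h * p / σ)) ≤ Emax} =
    Set.Icc (max pLτ pEmin) (min pmax pEmax) := by
  have hlog2 : 0 < Real.log 2 := Real.log_pos (by norm_num)
  have hBpos : ∀ p : ℝ, 0 < p → 0 < Real.logb 2 (1 + h * p / σ) := by
    intro p hp
    have : 0 < h * p / σ := by positivity
    exact Real.logb_pos (by norm_num) (by linarith)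
  obtain ⟨hpm0, hpmEq⟩ := hpEmin
  obtain ⟨hpM0, hpMEq⟩ := hpEmax
  -- F values at pEmin, pEmax
  have hFmin : pEmin * L / (ω * Real.logb 2 (1 + h * pEmin / σ)) = Emin := by
    have hd : ω * Real.logb 2 (1 + h * pEmin / σ) ≠ 0 := by
      have hB := hBpos pEmin hpm0; positivity
    rw [hpmEq, mul_comm, mul_div_assoc, div_self hd, mul_one]
  have hFmax : pEmax * L / (ω * Real.logb 2 (1 + h * pEmax / σ)) = Emax := by
    have hd : ω * Real.logb 2 (1 + h * pEmax / σ) ≠ 0 := by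
      have hB := hBpos pEmax hpM0; positivity
    rw [hpMEq, mul_comm, mul_div_assoc, div_self hd, mul_one]
  -- strict monotonicity of F
  have Fmono : ∀ a b : ℝ, 0 < a → a < b →
      a * L / (ω * Real.logb 2 (1 + h * a / σ)) < b * L / (ω * Real.logb 2 (1 + h * b / σ)) := by
    intro a b ha hab
    have hb : 0 < b := ha.trans hab
    have hBa := hBpos a ha
    have hBb := hBpos b hb
    rw [div_lt_div_iff₀ (by positivity) (by positivity)]
    have hkey := key_log (h / σ) (by positivity) ha hab
    have e1 : h / σ * a = h * a / σ := by ring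
    have e2 : h / σ * b = h * b / σ := by ring
    rw [e1, e2] at hkey
    have hLa : Real.logb 2 (1 + h * a / σ) = Real.log (1 + h * a / σ) / Real.log 2 := rfl
    have hLb : Real.logb 2 (1 + h * b / σ) = Real.log (1 + h * b / σ) / Real.log 2 := rfl
    rw [hLa, hLb]
    rw [hLa] at hBa
    rw [hLb] at hBb
    have hla : 0 < Real.log (1 + h * a / σ) := by
      have := (div_pos_iff.1 hBa); rcases this with ⟨h1,_⟩|⟨_,h2⟩
      · exact h1
      · linarith
    have hmul : a * Real.log (1 + h * b / σ) * (ω * L) < b * Real.log (1 + h * a / σ) * (ω * L) :=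
      mul_lt_mul_of_pos_right hkey (by positivity)
    calc a * L * (ω * (Real.log (1 + h * b / σ) / Real.log 2))
        = a * Real.log (1 + h * b / σ) * (ω * L) / Real.log 2 := by ring
      _ < b * Real.log (1 + h * a / σ) * (ω * L) / Real.log 2 := by gcongr
      _ = b * L * (ω * (Real.log (1 + h * a / σ) / Real.log 2)) := by ring
  have Fle : ∀ a b : ℝ, 0 < a → 0 < b →
      (a * L / (ω * Real.logb 2 (1 + h * a / σ)) ≤ b * L / (ω * Real.logb 2 (1 + h * b / σ))
        ↔ a ≤ b) := by
    intro a b ha hb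
    constructor
    · intro hle
      by_contra hab
      push_neg at hab
      exact absurd hle (not_le.2 (Fmono b a hb hab))
    · intro hab
      rcases eq_or_lt_of_le hab with rfl | hlt
      · exact le_refl _
      · exact (Fmono a b ha hlt).le
  -- deadline iff
  have hdl : ∀ p : ℝ, 0 < p →
      (L / (ω * Real.logb 2 (1 + h * p / σ)) ≤ τd ↔ pLτ ≤ p) := by
    intro p hp
    have hB := hBpos p hp
    have hden : 0 < ω * Real.logb 2 (1 + h * p / σ) := by positivity
    rw [div_le_iff₀ hden, hpLτ]
    have h1 : L ≤ τd * (ω * Real.logb 2 (1 + h * p / σ)) ↔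
        L / (ω * τd) ≤ Real.logb 2 (1 + h * p / σ) := by
      rw [div_le_iff₀ (by positivity)]
      constructor <;> intro <;> nlinarith
    have hxpos : (0:ℝ) < 1 + h * p / σ := by positivity
    have h2 : L / (ω * τd) ≤ Real.logb 2 (1 + h * p / σ) ↔
        (2:ℝ) ^ (L / (ω * τd)) ≤ 1 + h * p / σ := by
      exact Real.le_logb_iff_rpow_le (by norm_num : (1:ℝ) < 2) hxpos
    have h3 : (2:ℝ) ^ (L / (ω * τd)) ≤ 1 + h * p / σ ↔
        ((2:ℝ) ^ (L / (ω * τd)) - 1) * σ / h ≤ p := by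
      rw [div_le_iff₀ hh]
      have hd : h * p / σ * σ = h * p := div_mul_cancel₀ _ hσ.ne'
      constructor
      · intro H
        nlinarith [mul_le_mul_of_nonneg_right H hσ.le]
      · intro H
        have h5 : (2:ℝ) ^ (L / (ω * τd)) * σ ≤ (1 + h * p / σ) * σ := by nlinarith
        exact le_of_mul_le_mul_right h5 hσ
    rw [h1, h2, h3]
  ext p
  simp only [Set.mem_setOf_eq, Set.mem_Icc, max_le_iff, le_min_iff]
  constructor
  · rintro ⟨hp, hpm, hd, hlo, hhi⟩
    refine ⟨⟨(hdl p hp).1 hd, ?_⟩, hpm, ?_⟩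
    · exact (Fle pEmin p hpm0 hp).1 (by rw [hFmin]; exact hlo)
    · exact (Fle p pEmax hp hpM0).1 (by rw [hFmax]; exact hhi)
  · rintro ⟨⟨h1, h2⟩, h3, h4⟩
    have hp : 0 < p := lt_of_lt_of_le hpm0 h2
    refine ⟨hp, h3, (hdl p hp).2 h1, ?_, ?_⟩
    · rw [← hFmin]; exact (Fle pEmin p hpm0 hp).2 h2
    · rw [← hFmax]; exact (Fle p pEmax hp hpM0).2 h4
end

section
/- Let h, σ, V > 0 and B̃ < 0. Define Ξ(p) = −B̃·log₂(1 + h·p/σ) − (h/((σ + h·p)·ln 2))·(V − B̃·p). Then Ξ is strictly increasing on [0, ∞), Ξ(0) = −h·V/(σ·ln 2) < 0, and Ξ(p) → +∞ as p → +∞; consequently there exists a unique p₀ ∈ (0, ∞) with Ξ(p₀) = 0. -/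
/-!
Differentiating gives `Ξ'(p) = h²(V − B̃p) / ((σ + hp)² ln 2)`, which is positive for `p ≥ 0`
because `B̃ < 0`, so `Ξ` is strictly increasing. For `σ + hp ≠ 0` the second term of `Ξ` equals
`(−B̃ + (hV + B̃σ)/(σ + hp)) / ln 2`, which tends to `−B̃ / ln 2`, while the first term is a
positive multiple of a logarithm, so `Ξ → +∞`. Since `Ξ(0) < 0`, the intermediate value theorem
gives a positive root, unique by strict monotonicity.
-/

open Filter Topology Real Set

noncomputable def xi (h σ V B p : ℝ) : ℝ :=
  -B * logb 2 (1 + h * p / σ) - h / ((σ + h * p) * log 2) * (V - B * p)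

section

variable {h σ V B : ℝ}

theorem xi_zero : xi h σ V B 0 = -(h * V) / (σ * log 2) := by
  simp [xi]
  ring

theorem hasDerivAt_xi {x : ℝ} (hσ : σ ≠ 0) (hx : σ + h * x ≠ 0) :
    HasDerivAt (xi h σ V B) (h ^ 2 * (V - B * x) / ((σ + h * x) ^ 2 * log 2)) x := by
  have hlog2 : log 2 ≠ 0 := (log_pos one_lt_two).ne'
  have harg : 1 + h * x / σ ≠ 0 := by
    rwa [one_add_div hσ, div_ne_zero_iff, and_iff_left hσ]
  have hlog : HasDerivAt (fun p ↦ logb 2 (1 + h * p / σ)) (h / σ / (1 + h * x / σ) / log 2) x :=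
    ((((hasDerivAt_id x).const_mul h).div_const σ).const_add 1 |>.log harg).div_const (log 2)
      |>.congr_deriv (by simp)
  have hcoef : HasDerivAt (fun p ↦ h / ((σ + h * p) * log 2))
      (-(h * (h * log 2)) / ((σ + h * x) * log 2) ^ 2) x :=
    ((hasDerivAt_const x h).div ((((hasDerivAt_id x).const_mul h).const_add σ).mul_const (log 2))
      (mul_ne_zero hx hlog2)).congr_deriv (by simp)
  have hlin : HasDerivAt (fun p ↦ V - B * p) (-B) x := by
    simpa using ((hasDerivAt_id x).const_mul B).const_sub V
  refine ((hlog.const_mul (-B)).sub (hcoef.mul hlin)).congr_deriv ?_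
  field_simp
  ring

theorem continuousOn_xi (hh : 0 ≤ h) (hσ : 0 < σ) : ContinuousOn (xi h σ V B) (Ici 0) :=
  fun _ hx ↦ (hasDerivAt_xi hσ.ne' (add_pos_of_pos_of_nonneg hσ (mul_nonneg hh hx)).ne')
    |>.continuousAt.continuousWithinAt

theorem strictMonoOn_xi (hh : 0 < h) (hσ : 0 < σ) (hV : 0 < V) (hB : B ≤ 0) :
    StrictMonoOn (xi h σ V B) (Ici 0) := by
  refine strictMonoOn_of_deriv_pos (convex_Ici 0) (continuousOn_xi hh.le hσ) fun x hx ↦ ?_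
  rw [interior_Ici, mem_Ioi] at hx
  have hVx : 0 < V - B * x := by nlinarith
  rw [(hasDerivAt_xi hσ.ne' (by positivity)).deriv]
  positivity

theorem tendsto_xi_atTop (hh : 0 < h) (hσ : 0 < σ) (hB : B < 0) :
    Tendsto (xi h σ V B) atTop atTop := by
  have hdenom : Tendsto (fun p ↦ σ + h * p) atTop atTop :=
    tendsto_atTop_add_const_left _ σ (tendsto_id.const_mul_atTop hh)
  have hlog : Tendsto (fun p ↦ -B * logb 2 (1 + h * p / σ)) atTop atTop :=
    ((tendsto_logb_atTop one_lt_two).comp <| tendsto_atTop_add_const_left _ 1 <|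
      (tendsto_id.const_mul_atTop hh).atTop_div_const hσ).const_mul_atTop (neg_pos.mpr hB)
  have hcoef : Tendsto (fun p ↦ (-B + (h * V + B * σ) / (σ + h * p)) / log 2) atTop
      (𝓝 ((-B + 0) / log 2)) :=
    ((tendsto_const_nhds.div_atTop hdenom).const_add _).div_const _
  refine (hlog.atTop_add hcoef.neg).congr' ?_
  filter_upwards [eventually_ge_atTop 0] with p hp
  have : σ + h * p ≠ 0 := by positivity
  simp only [xi]
  field_simp
  ring

end

theorem existsUnique_mem_Ioi_eq_of_strictMonoOn {f : ℝ → ℝ} {a y : ℝ}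
    (hcont : ContinuousOn f (Ici a)) (hmono : StrictMonoOn f (Ici a)) (ha : f a < y)
    (htop : Tendsto f atTop atTop) : ∃! x, x ∈ Ioi a ∧ f x = y := by
  obtain ⟨b, hb, hab⟩ := ((htop.eventually_gt_atTop y).and (eventually_ge_atTop a)).exists
  obtain ⟨x, hx, hfx⟩ := intermediate_value_Ioo hab (hcont.mono Icc_subset_Ici_self) ⟨ha, hb⟩
  refine ⟨x, ⟨hx.1, hfx⟩, fun z ⟨hz, hfz⟩ ↦ ?_⟩
  exact hmono.injOn (mem_Ici_of_Ioi hz) (mem_Ici_of_Ioi hx.1) (hfz.trans hfx.symm)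

/-- For `B̃ < 0`, the function `Ξ(p) = −B̃·log₂(1+hp/σ) − (h/((σ+hp)·ln 2))·(V − B̃·p)`
is strictly increasing on `[0, ∞)`, satisfies `Ξ(0) = −hV/(σ·ln 2) < 0` and
`Ξ(p) → +∞` as `p → ∞`; hence it has a unique positive root. -/
theorem stmt_9 (h σ V Btilde : ℝ) (hh : 0 < h) (hσ : 0 < σ) (hV : 0 < V)
    (hB : Btilde < 0)
    (Ξ : ℝ → ℝ)
    (hΞ : ∀ p, Ξ p = -Btilde * Real.logb 2 (1 + h * p / σ)
      - (h / ((σ + h * p) * Real.log 2)) * (V - Btilde * p)) :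
    StrictMonoOn Ξ (Set.Ici 0) ∧
    Ξ 0 = -(h * V) / (σ * Real.log 2) ∧
    Ξ 0 < 0 ∧
    Tendsto Ξ atTop atTop ∧
    (∃! p₀ : ℝ, p₀ ∈ Set.Ioi (0 : ℝ) ∧ Ξ p₀ = 0) := by
  obtain rfl : Ξ = xi h σ V Btilde := funext hΞ
  have hmono := strictMonoOn_xi hh hσ hV hB.le
  have hneg : xi h σ V Btilde 0 < 0 := by
    rw [xi_zero, neg_div]
    exact neg_neg_of_pos (by positivity)
  have htop := tendsto_xi_atTop (V := V) hh hσ hB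
  exact ⟨hmono, xi_zero, hneg, htop,
    existsUnique_mem_Ioi_eq_of_strictMonoOn (continuousOn_xi hh.le hσ) hmono hneg htop⟩
end

section
/- Let h, σ, ω, V, L > 0, B̃ < 0, and 0 < p_L ≤ p_U. Define J_s(p) = (V − B̃·p)·L/(ω·log₂(1 + h·p/σ)) and let p₀ be the unique positive root of Ξ(p) = −B̃·log₂(1 + h·p/σ) − (h/((σ + h·p)·ln 2))·(V − B̃·p). Then J_s is decreasing on (0, p₀] and increasing on [p₀, ∞), and J_s attains its minimum over [p_L, p_U] at the point min(max(p₀, p_L), p_U) (i.e., at p₀ clamped to [p_L, p_U]). -/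
/-!
With `g(p) = log₂(1 + hp/σ)`, the quotient rule gives `J_s' = L·Ξ/(ω·g²)`, so `J_s'` has
the sign of `Ξ`. In `Ξ'` the terms `∓B̃·g'` cancel, leaving
`Ξ' = h²(V − B̃p)/((σ + hp)²·ln 2) > 0`; hence `Ξ` is strictly increasing on `[0, ∞)` and
changes sign exactly at its root `p₀`. A function that decreases up to `p₀` and increases
after it is minimised on `[p_L, p_U]` at the projection of `p₀`.
-/

open Set Real

lemma antitoneOn_Ioc_and_monotoneOn_Ici_of_hasDerivAt {f f' : ℝ → ℝ} {a c : ℝ} (hac : a < c)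
    (hf : ∀ x, a < x → HasDerivAt f (f' x) x) (hf'_nonpos : ∀ x ∈ Ioo a c, f' x ≤ 0)
    (hf'_nonneg : ∀ x ∈ Ioi c, 0 ≤ f' x) :
    AntitoneOn f (Ioc a c) ∧ MonotoneOn f (Ici c) := by
  have hcont : ∀ s ⊆ Ioi a, ContinuousOn f s := fun s hs x hx =>
    (hf x (hs hx)).continuousAt.continuousWithinAt
  constructor
  · refine antitoneOn_of_hasDerivWithinAt_nonpos (f' := f') (convex_Ioc a c)
      (hcont _ Ioc_subset_Ioi_self) (fun x hx => ?_) (fun x hx => ?_) <;>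
      rw [interior_Ioc] at *
    · exact (hf x hx.1).hasDerivWithinAt
    · exact hf'_nonpos x hx
  · refine monotoneOn_of_hasDerivWithinAt_nonneg (f' := f') (convex_Ici c)
      (hcont _ (Ici_subset_Ioi.mpr hac)) (fun x hx => ?_) (fun x hx => ?_) <;>
      rw [interior_Ici] at *
    · exact (hf x (hac.trans hx)).hasDerivWithinAt
    · exact hf'_nonneg x hx

lemma le_of_antitoneOn_Ioc_of_monotoneOn_Ici {f : ℝ → ℝ} {a c l u : ℝ}
    (hanti : AntitoneOn f (Ioc a c)) (hmono : MonotoneOn f (Ici c)) (hal : a < l) (hlu : l ≤ u)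
    {x : ℝ} (hx : x ∈ Icc l u) : f (min (max c l) u) ≤ f x := by
  rcases le_total c l with hcl | hlc
  · rw [max_eq_right hcl, min_eq_left hlu]
    exact hmono (mem_Ici.mpr hcl) (mem_Ici.mpr (hcl.trans hx.1)) hx.1
  rw [max_eq_left hlc]
  rcases le_total c u with hcu | huc
  · rw [min_eq_left hcu]
    rcases le_total x c with hxc | hcx
    · exact hanti ⟨hal.trans_le hx.1, hxc⟩ ⟨hal.trans_le hlc, le_rfl⟩ hxc
    · exact hmono self_mem_Ici hcx hcx
  · rw [min_eq_right huc]
    exact hanti ⟨hal.trans_le hx.1, hx.2.trans huc⟩ ⟨hal.trans_le hlu, huc⟩ hx.2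

section Offloading

variable {h σ V B : ℝ}

lemma hasDerivAt_logb_one_add_mul_div (hσ : σ ≠ 0) {p : ℝ} (hp : σ + h * p ≠ 0) :
    HasDerivAt (fun q => logb 2 (1 + h * q / σ)) (h / ((σ + h * p) * log 2)) p := by
  have hlin : HasDerivAt (fun q => 1 + h * q / σ) (h / σ) p := by
    simpa using ((hasDerivAt_id p).const_mul h).div_const σ |>.const_add 1
  have hne : 1 + h * p / σ ≠ 0 := by
    rw [one_add_div hσ]; exact div_ne_zero hp hσ
  refine ((hlin.log hne).div_const (log 2)).congr_deriv ?_
  field_simp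

lemma hasDerivAt_Xi (hσ : σ ≠ 0) {p : ℝ} (hp : σ + h * p ≠ 0) :
    HasDerivAt (fun q => -B * logb 2 (1 + h * q / σ) - (h / ((σ + h * q) * log 2)) * (V - B * q))
      (h ^ 2 * (V - B * p) / ((σ + h * p) ^ 2 * log 2)) p := by
  have hden : HasDerivAt (fun q => (σ + h * q) * log 2) (h * log 2) p := by
    simpa using (((hasDerivAt_id p).const_mul h).const_add σ).mul_const (log 2)
  have hnum : HasDerivAt (fun q => V - B * q) (-B) p := by
    simpa using ((hasDerivAt_id p).const_mul B).const_sub V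
  have hlog2 : log 2 ≠ 0 := by positivity
  refine (((hasDerivAt_logb_one_add_mul_div hσ hp).const_mul (-B)).sub
    (((hasDerivAt_const p h).div hden (mul_ne_zero hp hlog2)).mul hnum)).congr_deriv ?_
  simp only [Pi.div_apply]
  field_simp
  ring

lemma hasDerivAt_offloadingCost (hσ : σ ≠ 0) {L ω p : ℝ} (hp : σ + h * p ≠ 0)
    (hω : ω ≠ 0) (hlog : logb 2 (1 + h * p / σ) ≠ 0) :
    HasDerivAt (fun q => (V - B * q) * L / (ω * logb 2 (1 + h * q / σ)))
      (L * (-B * logb 2 (1 + h * p / σ) - (h / ((σ + h * p) * log 2)) * (V - B * p)) /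
        (ω * logb 2 (1 + h * p / σ) ^ 2)) p := by
  have hnum : HasDerivAt (fun q => (V - B * q) * L) (-B * L) p := by
    simpa using (((hasDerivAt_id p).const_mul B).const_sub V).mul_const L
  refine (hnum.div ((hasDerivAt_logb_one_add_mul_div hσ hp).const_mul ω)
    (mul_ne_zero hω hlog)).congr_deriv ?_
  field_simp

lemma strictMonoOn_Xi (hh : 0 < h) (hσ : 0 < σ) (hV : 0 < V) (hB : B ≤ 0) :
    StrictMonoOn
      (fun q => -B * logb 2 (1 + h * q / σ) - (h / ((σ + h * q) * log 2)) * (V - B * q))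
      (Ici 0) := by
  have hderiv : ∀ p ∈ Ici (0 : ℝ), HasDerivAt
      (fun q => -B * logb 2 (1 + h * q / σ) - (h / ((σ + h * q) * log 2)) * (V - B * q))
      (h ^ 2 * (V - B * p) / ((σ + h * p) ^ 2 * log 2)) p := fun p hp =>
    hasDerivAt_Xi hσ.ne' (by have : 0 ≤ p := hp; positivity)
  refine strictMonoOn_of_hasDerivWithinAt_pos (convex_Ici 0)
    (fun p hp => (hderiv p hp).continuousAt.continuousWithinAt)
    (fun p hp => (hderiv p (interior_subset hp)).hasDerivWithinAt) (fun p hp => ?_)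
  replace hp : 0 < p := by rwa [interior_Ici] at hp
  have : 0 < V - B * p := by nlinarith
  positivity

end Offloading

theorem stmt_11_general (h σ ω V L Btilde : ℝ) (hh : 0 < h) (hσ : 0 < σ) (hω : 0 < ω)
    (hV : 0 < V) (hL : 0 < L) (hB : Btilde < 0)
    (pL pU : ℝ) (hpL : 0 < pL) (hLU : pL ≤ pU)
    (Js Ξ : ℝ → ℝ)
    (hJs : ∀ p, Js p = (V - Btilde * p) * L / (ω * Real.logb 2 (1 + h * p / σ)))
    (hΞ : ∀ p, Ξ p = -Btilde * Real.logb 2 (1 + h * p / σ)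
      - (h / ((σ + h * p) * Real.log 2)) * (V - Btilde * p))
    (p₀ : ℝ) (hp₀pos : 0 < p₀) (hp₀root : Ξ p₀ = 0) :
    AntitoneOn Js (Set.Ioc 0 p₀) ∧
    MonotoneOn Js (Set.Ici p₀) ∧
    (∀ p ∈ Set.Icc pL pU, Js (min (max p₀ pL) pU) ≤ Js p) := by
  have hΞmono : StrictMonoOn Ξ (Ici 0) := by
    rw [show Ξ = _ from funext hΞ]
    exact strictMonoOn_Xi hh hσ hV hB.le
  have hJs' : ∀ p, 0 < p → HasDerivAt Js (L * Ξ p / (ω * logb 2 (1 + h * p / σ) ^ 2)) p := by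
    intro p hp
    have hlog : 0 < logb 2 (1 + h * p / σ) :=
      logb_pos one_lt_two (lt_add_of_pos_right 1 (by positivity))
    rw [show Js = _ from funext hJs, hΞ]
    exact hasDerivAt_offloadingCost hσ.ne' (by positivity) hω.ne' hlog.ne'
  have hΞneg : ∀ p ∈ Ioo 0 p₀, Ξ p < 0 := fun p hp =>
    hp₀root ▸ hΞmono hp.1.le hp₀pos.le hp.2
  have hΞpos : ∀ p ∈ Ioi p₀, 0 < Ξ p := fun p hp =>
    hp₀root ▸ hΞmono hp₀pos.le (hp₀pos.trans hp).le hp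
  obtain ⟨hanti, hmono⟩ := antitoneOn_Ioc_and_monotoneOn_Ici_of_hasDerivAt hp₀pos hJs'
    (fun p hp => div_nonpos_of_nonpos_of_nonneg
      (mul_nonpos_of_nonneg_of_nonpos hL.le (hΞneg p hp).le) (by positivity))
    (fun p hp => by have := hΞpos p hp; positivity)
  exact ⟨hanti, hmono,
    fun _ hp => le_of_antitoneOn_Ioc_of_monotoneOn_Ici hanti hmono hpL hLU hp⟩

/-- For `B̃ < 0`, the offloading objective `J_s(p) = (V − B̃p)·L/(ω·log₂(1+hp/σ))`
is decreasing on `(0, p₀]` and increasing on `[p₀, ∞)`, where `p₀` is the unique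
positive root of `Ξ`, so its minimum over `[p_L, p_U]` is attained at `p₀` clamped
to `[p_L, p_U]`. -/
theorem stmt_11 (h σ ω V L Btilde : ℝ) (hh : 0 < h) (hσ : 0 < σ) (hω : 0 < ω)
    (hV : 0 < V) (hL : 0 < L) (hB : Btilde < 0)
    (pL pU : ℝ) (hpL : 0 < pL) (hLU : pL ≤ pU)
    (Js Ξ : ℝ → ℝ)
    (hJs : ∀ p, Js p = (V - Btilde * p) * L / (ω * Real.logb 2 (1 + h * p / σ)))
    (hΞ : ∀ p, Ξ p = -Btilde * Real.logb 2 (1 + h * p / σ)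
      - (h / ((σ + h * p) * Real.log 2)) * (V - Btilde * p))
    (p₀ : ℝ) (hp₀pos : 0 < p₀) (hp₀root : Ξ p₀ = 0)
    (hp₀uniq : ∀ p : ℝ, 0 < p → Ξ p = 0 → p = p₀) :
    AntitoneOn Js (Set.Ioc 0 p₀) ∧
    MonotoneOn Js (Set.Ici p₀) ∧
    (∀ p ∈ Set.Icc pL pU, Js (min (max p₀ pL) pU) ≤ Js p) :=
  stmt_11_general h σ ω V L Btilde hh hσ hω hV hL hB pL pU hpL hLU Js Ξ hJs hΞ p₀ hp₀pos hp₀root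
end

section
/- Let h, σ, ω, V, L > 0, B̃ ≥ 0, and 0 < p_L ≤ p_U. Then J_s(p) = (V − B̃·p)·L/(ω·log₂(1 + h·p/σ)) is non-increasing on (0, ∞); consequently its minimum over [p_L, p_U] is attained at p = p_U. -/
lemma key_ineq {c x y : ℝ} (hc : 0 < c) (hx : 0 < x) (hxy : x ≤ y) :
    x * Real.log (1 + c * y) ≤ y * Real.log (1 + c * x) := by
  have hy : 0 < y := hx.trans_le hxy
  have h1 : (1 : ℝ) ≤ y / x := (one_le_div hx).mpr hxy
  have hs : (-1 : ℝ) ≤ c * x := by nlinarith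
  have hb := one_add_mul_self_le_rpow_one_add hs h1
  have heq : 1 + (y / x) * (c * x) = 1 + c * y := by field_simp
  rw [heq] at hb
  have hpos : (0 : ℝ) < 1 + c * x := by nlinarith
  have h2 : Real.log (1 + c * y) ≤ (y / x) * Real.log (1 + c * x) := by
    calc Real.log (1 + c * y) ≤ Real.log ((1 + c * x) ^ (y / x)) :=
          Real.log_le_log (by nlinarith) hb
      _ = (y / x) * Real.log (1 + c * x) := Real.log_rpow hpos _
  have := mul_le_mul_of_nonneg_left h2 hx.le
  calc x * Real.log (1 + c * y) ≤ x * ((y / x) * Real.log (1 + c * x)) := this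
    _ = y * Real.log (1 + c * x) := by field_simp

/-- For `B̃ ≥ 0`, the offloading objective `J_s(p) = (V − B̃p)·L/(ω·log₂(1+hp/σ))`
is non-increasing on `(0, ∞)`; hence its minimum over `[p_L, p_U]` is attained
at `p_U`. -/
theorem stmt_12 (h σ ω V L Btilde : ℝ) (hh : 0 < h) (hσ : 0 < σ) (hω : 0 < ω)
    (hV : 0 < V) (hL : 0 < L) (hB : 0 ≤ Btilde)
    (pL pU : ℝ) (hpL : 0 < pL) (hLU : pL ≤ pU)
    (Js : ℝ → ℝ)
    (hJs : ∀ p, Js p = (V - Btilde * p) * L / (ω * Real.logb 2 (1 + h * p / σ))) :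
    AntitoneOn Js (Set.Ioi 0) ∧
    (∀ p ∈ Set.Icc pL pU, Js pU ≤ Js p) := by
  set c := h / σ with hc
  have hcpos : 0 < c := div_pos hh hσ
  have hlog2 : 0 < Real.log 2 := Real.log_pos one_lt_two
  have hg : ∀ p, 0 < p → 0 < ω * Real.logb 2 (1 + h * p / σ) := by
    intro p hp
    have : (1 : ℝ) < 1 + h * p / σ := by
      have : 0 < h * p / σ := div_pos (mul_pos hh hp) hσ
      linarith
    exact mul_pos hω (Real.logb_pos one_lt_two this)
  have hmain : AntitoneOn Js (Set.Ioi 0) := by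
    intro x hx y hy hxy
    simp only [Set.mem_Ioi] at hx hy
    rw [hJs, hJs]
    have hgx := hg x hx
    have hgy := hg y hy
    rw [div_le_div_iff₀ hgy hgx]
    have hkey : x * Real.log (1 + c * y) ≤ y * Real.log (1 + c * x) := key_ineq hcpos hx hxy
    have hex : h * x / σ = c * x := by rw [hc]; ring
    have hey : h * y / σ = c * y := by rw [hc]; ring
    rw [hex, hey]
    simp only [Real.logb] 
    have hmono : Real.log (1 + c * x) ≤ Real.log (1 + c * y) :=
      Real.log_le_log (by nlinarith) (by nlinarith)
    have hBxy : Btilde * (x * Real.log (1 + c * y)) ≤ Btilde * (y * Real.log (1 + c * x)) :=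
      mul_le_mul_of_nonneg_left hkey hB
    have hVm : V * Real.log (1 + c * x) ≤ V * Real.log (1 + c * y) :=
      mul_le_mul_of_nonneg_left hmono hV.le
    have hfinal : (V - Btilde * y) * Real.log (1 + c * x) ≤
        (V - Btilde * x) * Real.log (1 + c * y) := by nlinarith
    have hωlog : 0 < ω / Real.log 2 := div_pos hω hlog2
    have hL' : 0 < L * (ω / Real.log 2) := mul_pos hL hωlog
    calc (V - Btilde * y) * L * (ω * (Real.log (1 + c * x) / Real.log 2))
        = ((V - Btilde * y) * Real.log (1 + c * x)) * (L * (ω / Real.log 2)) := by ring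
      _ ≤ ((V - Btilde * x) * Real.log (1 + c * y)) * (L * (ω / Real.log 2)) :=
          mul_le_mul_of_nonneg_right hfinal hL'.le
      _ = (V - Btilde * x) * L * (ω * (Real.log (1 + c * y) / Real.log 2)) := by ring
  refine ⟨hmain, fun p hp => ?_⟩
  obtain ⟨h1, h2⟩ := hp
  exact hmain (Set.mem_Ioi.mpr (hpL.trans_le h1)) (Set.mem_Ioi.mpr (hpL.trans_le (h1.trans h2))) h2
end

section
/- Let h, σ > 0 and define k(p) = h·p/ln 2 − (h·p + σ)·log₂(1 + h·p/σ). Then k is strictly decreasing on [0, ∞) with k(0) = 0, so k(p) < 0 for all p > 0. Moreover, for any V > 0, B̃ < 0 and p > 0, one has Ξ(p) = 0 (where Ξ(p) = −B̃·log₂(1 + h·p/σ) − (h/((σ + h·p)·ln 2))·(V − B̃·p)) if and only if B̃·k(p) = h·V/ln 2. -/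
/-!
Substituting `x = h p / σ` gives `k p = σ / ln 2 · (x - (1 + x) log (1 + x))`, and
`x ↦ x - (1 + x) log (1 + x)` has derivative `-log (1 + x) < 0` for `x > 0`. The
characterisation of `Ξ(p) = 0` is the identity `Ξ(p) = (B̃ k(p) ln 2 - h V) / ((σ + h p) ln 2)`.
-/

open Real Set

theorem hasDerivAt_sub_one_add_mul_log {x : ℝ} (hx : -1 < x) :
    HasDerivAt (fun x => x - (1 + x) * log (1 + x)) (-log (1 + x)) x := by
  have hx' : 1 + x ≠ 0 := by linarith
  have hlog := ((hasDerivAt_id x).const_add 1).log hx'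
  refine ((hasDerivAt_id x).sub (((hasDerivAt_id x).const_add 1).mul hlog)).congr_deriv ?_
  rw [id_eq, mul_one_div_cancel hx']
  ring

theorem strictAntiOn_sub_one_add_mul_log :
    StrictAntiOn (fun x => x - (1 + x) * log (1 + x)) (Ici 0) := by
  refine strictAntiOn_of_deriv_neg (convex_Ici 0) (fun x hx => ?_) (fun x hx => ?_)
  · exact (hasDerivAt_sub_one_add_mul_log (by linarith [mem_Ici.mp hx])).continuousAt
      |>.continuousWithinAt
  · rw [interior_Ici] at hx
    rw [(hasDerivAt_sub_one_add_mul_log (by linarith [mem_Ioi.mp hx])).deriv, neg_neg_iff_pos]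
    exact log_pos (by linarith [mem_Ioi.mp hx])

theorem mul_div_log_two_sub_mul_logb {h σ : ℝ} (hσ : σ ≠ 0) (p : ℝ) :
    h * p / log 2 - (h * p + σ) * logb 2 (1 + h * p / σ) =
      σ / log 2 * (h * p / σ - (1 + h * p / σ) * log (1 + h * p / σ)) := by
  rw [logb]
  field_simp
  ring

theorem neg_mul_logb_sub_eq_zero_iff {h σ p : ℝ} (B V : ℝ) (hσp : σ + h * p ≠ 0) :
    -B * logb 2 (1 + h * p / σ) - h / ((σ + h * p) * log 2) * (V - B * p) = 0 ↔
      B * (h * p / log 2 - (h * p + σ) * logb 2 (1 + h * p / σ)) = h * V / log 2 := by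
  rw [logb]
  field_simp
  rw [mul_zero]
  constructor <;> intro hΞ <;> linear_combination hΞ

/-- The function `k(p) = hp/ln 2 − (hp + σ)·log₂(1 + hp/σ)` is strictly decreasing
on `[0, ∞)` with `k(0) = 0`, hence negative for `p > 0`; moreover for `V > 0`,
`B̃ < 0` and `p > 0`, `Ξ(p) = 0` iff `B̃·k(p) = hV/ln 2`. -/
theorem stmt_13 (h σ : ℝ) (hh : 0 < h) (hσ : 0 < σ)
    (k : ℝ → ℝ)
    (hk : ∀ p, k p = h * p / Real.log 2
      - (h * p + σ) * Real.logb 2 (1 + h * p / σ)) :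
    StrictAntiOn k (Set.Ici 0) ∧
    k 0 = 0 ∧
    (∀ p : ℝ, 0 < p → k p < 0) ∧
    (∀ V Btilde p : ℝ, 0 < V → Btilde < 0 → 0 < p →
      ((-Btilde * Real.logb 2 (1 + h * p / σ)
        - (h / ((σ + h * p) * Real.log 2)) * (V - Btilde * p) = 0) ↔
       Btilde * k p = h * V / Real.log 2)) := by
  have hanti : StrictAntiOn k (Ici 0) := by
    intro a ha b hb hab
    simp only [hk, mul_div_log_two_sub_mul_logb hσ.ne']
    have hnonneg {q : ℝ} (hq : q ∈ Ici 0) : h * q / σ ∈ Ici 0 :=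
      div_nonneg (mul_nonneg hh.le hq) hσ.le
    exact mul_lt_mul_of_pos_left
      (strictAntiOn_sub_one_add_mul_log (hnonneg ha) (hnonneg hb) (by gcongr)) (by positivity)
  have hk0 : k 0 = 0 := by simp [hk]
  refine ⟨hanti, hk0, fun p hp => hk0 ▸ hanti self_mem_Ici hp.le hp, ?_⟩
  intro V Btilde p _ _ hp
  rw [hk]
  exact neg_mul_logb_sub_eq_zero_iff Btilde V (by positivity)
end

section
/- Let h, σ, V > 0. For B̃ < 0, let p₀(B̃) denote the unique positive root of Ξ(p) = −B̃·log₂(1 + h·p/σ) − (h/((σ + h·p)·ln 2))·(V − B̃·p). Then p₀ is strictly increasing in B̃: whenever B̃₋ < B̃₊ < 0, one has p₀(B̃₋) < p₀(B̃₊). Consequently, for any fixed 0 < p_L ≤ p_U, the optimal transmit power min(max(p₀(B̃), p_L), p_U) is non-decreasing in B̃ on (−∞, 0). -/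
/-!
With `t = 1 + h p / σ`, clearing the denominators of `Ξ` turns the root equation into
`(-B̃) σ φ(t) = h V`, where `φ(t) = t log t + 1 - t` is `InformationTheory.klFun`. Since `φ` is
strictly increasing on `[1, ∞)` and positive beyond `1`, raising `B̃` towards `0` shrinks the
factor `-B̃`, so `φ(t)`, hence `t` and `p₀(B̃)`, must grow. Clamping is monotone.
-/

open Real InformationTheory

lemma strictMonoOn_klFun : StrictMonoOn klFun (Set.Ici 1) := by
  refine strictMonoOn_of_deriv_pos (convex_Ici 1) continuous_klFun.continuousOn fun x hx => ?_
  rw [interior_Ici] at hx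
  rw [deriv_klFun]
  exact log_pos hx

lemma klFun_pos_of_one_lt {x : ℝ} (hx : 1 < x) : 0 < klFun x :=
  klFun_one ▸ strictMonoOn_klFun Set.self_mem_Ici hx.le hx

lemma lt_of_mul_klFun_eq_mul_klFun {a b s t : ℝ} (hb : 0 < b) (hba : b < a) (hs : 1 < s)
    (ht : 1 ≤ t) (heq : a * klFun s = b * klFun t) : s < t := by
  have hlt : b * klFun s < b * klFun t :=
    heq ▸ mul_lt_mul_of_pos_right hba (klFun_pos_of_one_lt hs)
  exact (strictMonoOn_klFun.lt_iff_lt hs.le ht).1 (lt_of_mul_lt_mul_left hlt hb.le)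

lemma shannon_root_iff {h σ V B p : ℝ} (hσ : σ ≠ 0) (hp : σ + h * p ≠ 0) :
    -B * logb 2 (1 + h * p / σ) - (h / ((σ + h * p) * log 2)) * (V - B * p) = 0 ↔
      -B * σ * klFun (1 + h * p / σ) = h * V := by
  have hl2 : log 2 ≠ 0 := by positivity
  have key : -B * logb 2 (1 + h * p / σ) - (h / ((σ + h * p) * log 2)) * (V - B * p) =
      (-B * σ * klFun (1 + h * p / σ) - h * V) / ((σ + h * p) * log 2) := by
    rw [klFun_apply, logb]
    generalize log (1 + h * p / σ) = L
    field_simp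
    ring
  rw [key, div_eq_zero_iff, or_iff_left (mul_ne_zero hp hl2), sub_eq_zero]

theorem stmt_14_general (h σ V : ℝ) (hh : 0 < h) (hσ : 0 < σ)
    (p₀ : ℝ → ℝ)
    (hp₀ : ∀ Btilde : ℝ, Btilde < 0 → 0 < p₀ Btilde ∧
      -Btilde * Real.logb 2 (1 + h * p₀ Btilde / σ)
        - (h / ((σ + h * p₀ Btilde) * Real.log 2)) * (V - Btilde * p₀ Btilde) = 0) :
    StrictMonoOn p₀ (Set.Iio 0) ∧
    (∀ pL pU : ℝ, 0 < pL → pL ≤ pU →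
      MonotoneOn (fun Btilde => min (max (p₀ Btilde) pL) pU) (Set.Iio 0)) := by
  have hgain : ∀ B < 0, 1 < 1 + h * p₀ B / σ := fun B hB => by
    have := (hp₀ B hB).1
    simp only [lt_add_iff_pos_right]
    positivity
  have hroot : ∀ B < 0, -B * σ * klFun (1 + h * p₀ B / σ) = h * V := fun B hB => by
    have := (hp₀ B hB).1
    exact (shannon_root_iff hσ.ne' (by positivity)).1 (hp₀ B hB).2
  have hsm : StrictMonoOn p₀ (Set.Iio 0) := by
    intro B₁ hB₁ B₂ hB₂ hlt
    have ht : 1 + h * p₀ B₁ / σ < 1 + h * p₀ B₂ / σ :=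
      lt_of_mul_klFun_eq_mul_klFun (mul_pos (neg_pos.2 hB₂) hσ)
        (mul_lt_mul_of_pos_right (neg_lt_neg hlt) hσ) (hgain B₁ hB₁) (hgain B₂ hB₂).le
        ((hroot B₁ hB₁).trans (hroot B₂ hB₂).symm)
    exact lt_of_mul_lt_mul_left ((div_lt_div_iff_of_pos_right hσ).1 (lt_of_add_lt_add_left ht))
      hh.le
  exact ⟨hsm, fun _ _ _ _ => (hsm.monotoneOn.max monotoneOn_const).min monotoneOn_const⟩

/-- The unconstrained optimal transmit power `p₀(B̃)` (the unique positive root of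
`Ξ(·, B̃)`) is strictly increasing in the virtual energy queue length `B̃` on `(−∞, 0)`,
and consequently the clamped optimal transmit power `min(max(p₀(B̃), p_L), p_U)` is
non-decreasing in `B̃` on `(−∞, 0)`. -/
theorem stmt_14 (h σ V : ℝ) (hh : 0 < h) (hσ : 0 < σ) (hV : 0 < V)
    (p₀ : ℝ → ℝ)
    (hp₀ : ∀ Btilde : ℝ, Btilde < 0 → 0 < p₀ Btilde ∧
      -Btilde * Real.logb 2 (1 + h * p₀ Btilde / σ)
        - (h / ((σ + h * p₀ Btilde) * Real.log 2)) * (V - Btilde * p₀ Btilde) = 0) :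
    StrictMonoOn p₀ (Set.Iio 0) ∧
    (∀ pL pU : ℝ, 0 < pL → pL ≤ pU →
      MonotoneOn (fun Btilde => min (max (p₀ Btilde) pL) pU) (Set.Iio 0)) :=
  stmt_14_general h σ V hh hσ p₀ hp₀
end

section
/- Let θ ≥ 0 and E_H^max ≥ 0, and let B, E, e, E_H : ℕ → ℝ be sequences satisfying: B(0) = 0; B(t+1) = B(t) − E(t) + e(t) for all t; 0 ≤ E(t) ≤ B(t) for all t; 0 ≤ E_H(t) ≤ E_H^max for all t; and e(t) = E_H(t) if B(t) ≤ θ and e(t) = 0 if B(t) > θ. Then 0 ≤ B(t) ≤ θ + E_H^max for every t ∈ ℕ. -/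
/-- Under the LODCO energy harvesting rule (harvest everything when `B(t) ≤ θ`,
nothing when `B(t) > θ`) and the energy causality constraint `0 ≤ E(t) ≤ B(t)`,
the battery level stays within `[0, θ + E_H^max]` for all time slots. -/
theorem stmt_16 (θ EHmax : ℝ) (hθ : 0 ≤ θ) (hEHmax : 0 ≤ EHmax)
    (B E e EH : ℕ → ℝ)
    (hB0 : B 0 = 0)
    (hBdyn : ∀ t, B (t + 1) = B t - E t + e t)
    (hE : ∀ t, 0 ≤ E t ∧ E t ≤ B t)
    (hEH : ∀ t, 0 ≤ EH t ∧ EH t ≤ EHmax)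
    (he : ∀ t, (B t ≤ θ → e t = EH t) ∧ (θ < B t → e t = 0)) :
    ∀ t : ℕ, 0 ≤ B t ∧ B t ≤ θ + EHmax := by
  intro t
  induction t with
  | zero => simp [hB0]; positivity
  | succ n ih =>
    obtain ⟨hEl, hEu⟩ := hE n
    obtain ⟨hEHl, hEHu⟩ := hEH n
    have he0 : 0 ≤ e n := by
      rcases le_or_gt (B n) θ with h | h
      · rw [(he n).1 h]; exact hEHl
      · rw [(he n).2 h]
    constructor
    · rw [hBdyn n]; linarith
    · rw [hBdyn n]
      rcases le_or_gt (B n) θ with h | h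
      · have := (he n).1 h; linarith
      · have := (he n).2 h; linarith
end
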